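/- arXiv:1609.02080 — 2 statements merged into one kernel-verified Lean document; each statement's English description precedes it below -/
import Mathlib

section
/- Let p ≥ 2 be real, m a natural number, and let z₁,...,z_m be vectors in a real normed space X such that for every real tuple (λᵢ), ‖∑ᵢ λᵢ zᵢ‖ = (∑ᵢ |λᵢ|^p)^(1/p). If y₁ = ∑ᵢ λᵢ zᵢ and y₂ = ∑ᵢ μᵢ zᵢ, then ‖(y₁+y₂)/2‖^p + ‖(y₁−y₂)/2‖^p ≤ (‖y₁‖^p + ‖y₂‖^p)/2. -/
lemma aux_rpow_add_le (x y q : ℝ) (hx : 0 ≤ x) (hy : 0 ≤ y) (hq : 1 ≤ q) :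
    x ^ q + y ^ q ≤ (x + y) ^ q := by
  lift x to NNReal using hx
  lift y to NNReal using hy
  have := NNReal.add_rpow_le_rpow_add (p := q) x y hq
  exact_mod_cast this

lemma aux_convex (x y q : ℝ) (hx : 0 ≤ x) (hy : 0 ≤ y) (hq : 1 ≤ q) :
    ((x + y) / 2) ^ q ≤ (x ^ q + y ^ q) / 2 := by
  have h := (convexOn_rpow hq).2 (Set.mem_Ici.2 hx) (Set.mem_Ici.2 hy)
    (by norm_num : (0:ℝ) ≤ 1/2) (by norm_num : (0:ℝ) ≤ 1/2) (by norm_num)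
  simp only [smul_eq_mul] at h
  calc ((x + y) / 2) ^ q = (1/2 * x + 1/2 * y) ^ q := by ring_nf
    _ ≤ 1/2 * x ^ q + 1/2 * y ^ q := h
    _ = (x ^ q + y ^ q) / 2 := by ring

lemma aux_sq_rpow (c : ℝ) (p : ℝ) : (c ^ 2) ^ (p / 2) = |c| ^ p := by
  rw [← sq_abs c, ← Real.rpow_natCast |c| 2, ← Real.rpow_mul (abs_nonneg c)]
  norm_num
  congr 1
  ring

lemma aux_clarkson (p : ℝ) (hp : 2 ≤ p) (a b : ℝ) :
    |(a + b) / 2| ^ p + |(a - b) / 2| ^ p ≤ (|a| ^ p + |b| ^ p) / 2 := by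
  have hq : (1:ℝ) ≤ p / 2 := by linarith
  have hp0 : (0:ℝ) ≤ p := by linarith
  have h1 : |(a + b) / 2| ^ p + |(a - b) / 2| ^ p
      ≤ (((a + b) / 2) ^ 2 + ((a - b) / 2) ^ 2) ^ (p / 2) := by
    rw [← aux_sq_rpow ((a+b)/2) p, ← aux_sq_rpow ((a-b)/2) p]
    exact aux_rpow_add_le _ _ _ (sq_nonneg _) (sq_nonneg _) hq
  have h2 : ((a + b) / 2) ^ 2 + ((a - b) / 2) ^ 2 = (a ^ 2 + b ^ 2) / 2 := by ring
  have h3 : ((a ^ 2 + b ^ 2) / 2) ^ (p / 2) ≤ ((a ^ 2) ^ (p/2) + (b ^ 2) ^ (p/2)) / 2 :=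
    aux_convex _ _ _ (sq_nonneg a) (sq_nonneg b) hq
  rw [aux_sq_rpow a p, aux_sq_rpow b p] at h3
  calc |(a + b) / 2| ^ p + |(a - b) / 2| ^ p
      ≤ (((a + b) / 2) ^ 2 + ((a - b) / 2) ^ 2) ^ (p / 2) := h1
    _ = ((a ^ 2 + b ^ 2) / 2) ^ (p / 2) := by rw [h2]
    _ ≤ (|a| ^ p + |b| ^ p) / 2 := h3

theorem stmt_6 (p : ℝ) (hp : 2 ≤ p) (m : ℕ) (X : Type*)
    [NormedAddCommGroup X] [NormedSpace ℝ X] (z : Fin m → X)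
    (hz : ∀ lam : Fin m → ℝ, ‖∑ i, lam i • z i‖ = (∑ i, |lam i| ^ p) ^ (1 / p))
    (lam mu : Fin m → ℝ) (y₁ y₂ : X)
    (hy₁ : y₁ = ∑ i, lam i • z i) (hy₂ : y₂ = ∑ i, mu i • z i) :
    ‖(2⁻¹ : ℝ) • (y₁ + y₂)‖ ^ p + ‖(2⁻¹ : ℝ) • (y₁ - y₂)‖ ^ p
      ≤ (‖y₁‖ ^ p + ‖y₂‖ ^ p) / 2 := by
  have hp0 : (0:ℝ) < p := by linarith
  have norm_pow : ∀ c : Fin m → ℝ, ‖∑ i, c i • z i‖ ^ p = ∑ i, |c i| ^ p := by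
    intro c
    have hnn : (0:ℝ) ≤ ∑ i, |c i| ^ p :=
      Finset.sum_nonneg fun i _ => Real.rpow_nonneg (abs_nonneg _) _
    rw [hz c, ← Real.rpow_mul hnn, one_div, inv_mul_cancel₀ hp0.ne', Real.rpow_one]
  have e1 : (2⁻¹ : ℝ) • (y₁ + y₂) = ∑ i, ((lam i + mu i) / 2) • z i := by
    subst hy₁ hy₂
    rw [← Finset.sum_add_distrib, Finset.smul_sum]
    refine Finset.sum_congr rfl fun i _ => ?_
    rw [← add_smul, smul_smul]
    congr 1
    ring
  have e2 : (2⁻¹ : ℝ) • (y₁ - y₂) = ∑ i, ((lam i - mu i) / 2) • z i := by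
    subst hy₁ hy₂
    rw [← Finset.sum_sub_distrib, Finset.smul_sum]
    refine Finset.sum_congr rfl fun i _ => ?_
    rw [← sub_smul, smul_smul]
    congr 1
    ring
  rw [e1, e2, hy₁, hy₂, norm_pow, norm_pow, norm_pow, norm_pow,
    ← Finset.sum_add_distrib, ← Finset.sum_add_distrib]
  refine (Finset.sum_le_sum fun i _ => aux_clarkson p hp (lam i) (mu i)).trans ?_
  rw [Finset.sum_div]
end

section
/- Let p ≥ 2 be real, m a natural number, and ε ∈ (0,2]. For all x, y in ℝ^m with the ℓ^p norm satisfying ‖x‖ ≤ 1, ‖y‖ ≤ 1, and ‖x−y‖ ≥ ε, we have ‖(x+y)/2‖ ≤ (1 − (ε/2)^p)^(1/p). -/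
/-!
Clarkson's inequality: for `r ≥ 2` and real `a, b`,
`|(a + b)/2|^r + |(a - b)/2|^r ≤ (|a|^r + |b|^r)/2`. Writing `|t|^r = (t²)^(r/2)` with `r/2 ≥ 1`,
superadditivity of `u ↦ u^(r/2)` and the parallelogram law `((a+b)/2)² + ((a-b)/2)² = (a² + b²)/2`
reduce it to convexity of `u ↦ u^(r/2)`. Summing over coordinates gives the same inequality for
the `ℓ^r` norm, and with `‖x‖, ‖y‖ ≤ 1`, `‖x - y‖ ≥ ε` it leaves `‖(x + y)/2‖^r ≤ 1 - (ε/2)^r`.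
-/

open scoped ENNReal

namespace Real

lemma rpow_add_div_two_le_add_rpow_div_two {s a b : ℝ} (hs : 1 ≤ s) (ha : 0 ≤ a) (hb : 0 ≤ b) :
    ((a + b) / 2) ^ s ≤ (a ^ s + b ^ s) / 2 := by
  have h := (convexOn_rpow hs).2 ha hb (by norm_num : (0 : ℝ) ≤ 1 / 2)
    (by norm_num : (0 : ℝ) ≤ 1 / 2) (add_halves 1)
  simp only [smul_eq_mul] at h
  calc ((a + b) / 2) ^ s = (1 / 2 * a + 1 / 2 * b) ^ s := by ring_nf
    _ ≤ 1 / 2 * a ^ s + 1 / 2 * b ^ s := h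
    _ = (a ^ s + b ^ s) / 2 := by ring

lemma abs_rpow_eq_sq_rpow_div_two (r t : ℝ) : |t| ^ r = (t ^ 2) ^ (r / 2) := by
  rw [rpow_div_two_eq_sqrt r (sq_nonneg t), sqrt_sq_eq_abs]

theorem abs_half_add_rpow_add_abs_half_sub_rpow_le {r : ℝ} (hr : 2 ≤ r) (a b : ℝ) :
    |2⁻¹ * (a + b)| ^ r + |2⁻¹ * (a - b)| ^ r ≤ (|a| ^ r + |b| ^ r) / 2 := by
  have hs : 1 ≤ r / 2 := by linarith
  simp only [abs_rpow_eq_sq_rpow_div_two r]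
  calc ((2⁻¹ * (a + b)) ^ 2) ^ (r / 2) + ((2⁻¹ * (a - b)) ^ 2) ^ (r / 2)
      ≤ ((2⁻¹ * (a + b)) ^ 2 + (2⁻¹ * (a - b)) ^ 2) ^ (r / 2) :=
        add_rpow_le_rpow_add (sq_nonneg _) (sq_nonneg _) hs
    _ = ((a ^ 2 + b ^ 2) / 2) ^ (r / 2) := by ring_nf
    _ ≤ ((a ^ 2) ^ (r / 2) + (b ^ 2) ^ (r / 2)) / 2 :=
        rpow_add_div_two_le_add_rpow_div_two hs (sq_nonneg a) (sq_nonneg b)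

end Real

namespace PiLp

variable {ι : Type*} [Fintype ι] {p : ℝ≥0∞}

lemma norm_rpow_eq_sum_norm_rpow {β : ι → Type*} [∀ i, SeminormedAddCommGroup (β i)]
    (hp : 0 < p.toReal) (f : PiLp p β) : ‖f‖ ^ p.toReal = ∑ i, ‖f i‖ ^ p.toReal := by
  rw [norm_eq_sum hp, ← Real.rpow_mul (Finset.sum_nonneg fun i _ => by positivity),
    one_div_mul_cancel hp.ne', Real.rpow_one]

theorem norm_half_add_rpow_add_norm_half_sub_rpow_le (hp : 2 ≤ p.toReal)
    (x y : PiLp p (fun _ : ι => ℝ)) :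
    ‖(2⁻¹ : ℝ) • (x + y)‖ ^ p.toReal + ‖(2⁻¹ : ℝ) • (x - y)‖ ^ p.toReal
      ≤ (‖x‖ ^ p.toReal + ‖y‖ ^ p.toReal) / 2 := by
  simp only [norm_rpow_eq_sum_norm_rpow (by linarith : 0 < p.toReal), smul_apply, add_apply,
    sub_apply, smul_eq_mul, Real.norm_eq_abs]
  rw [← Finset.sum_add_distrib, ← Finset.sum_add_distrib, Finset.sum_div]
  gcongr with i
  exact Real.abs_half_add_rpow_add_abs_half_sub_rpow_le hp (x i) (y i)

end PiLp

theorem stmt_8_general (p : ℝ≥0∞) (hp : 2 ≤ p) (hp' : p ≠ ⊤) (m : ℕ) (ε : ℝ)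
    (hε : 0 < ε) (x y : PiLp p (fun _ : Fin m => ℝ))
    (hx : ‖x‖ ≤ 1) (hy : ‖y‖ ≤ 1) (hxy : ε ≤ ‖x - y‖) :
    ‖(2⁻¹ : ℝ) • (x + y)‖ ≤ (1 - (ε / 2) ^ p.toReal) ^ (1 / p.toReal) := by
  have : Fact (1 ≤ p) := ⟨le_trans (by norm_num) hp⟩
  set r := p.toReal
  have hr : 2 ≤ r := by simpa using ENNReal.toReal_mono hp' hp
  have hr0 : 0 < r := by linarith
  have hclarkson := PiLp.norm_half_add_rpow_add_norm_half_sub_rpow_le hr x y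
  have hsep : (ε / 2) ^ r ≤ ‖(2⁻¹ : ℝ) • (x - y)‖ ^ r := by
    rw [norm_smul, Real.norm_of_nonneg (by norm_num), ← div_eq_inv_mul]
    gcongr
  have hxr : ‖x‖ ^ r ≤ 1 := Real.rpow_le_one (norm_nonneg x) hx hr0.le
  have hyr : ‖y‖ ^ r ≤ 1 := Real.rpow_le_one (norm_nonneg y) hy hr0.le
  have hmid : ‖(2⁻¹ : ℝ) • (x + y)‖ ^ r ≤ 1 - (ε / 2) ^ r := by linarith
  rw [one_div, Real.le_rpow_inv_iff_of_pos (norm_nonneg _)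
    ((Real.rpow_nonneg (norm_nonneg _) r).trans hmid) hr0]
  exact hmid

theorem stmt_8 (p : ℝ≥0∞) (hp : 2 ≤ p) (hp' : p ≠ ⊤) (m : ℕ) (ε : ℝ)
    (hε : 0 < ε) (hε2 : ε ≤ 2) (x y : PiLp p (fun _ : Fin m => ℝ))
    (hx : ‖x‖ ≤ 1) (hy : ‖y‖ ≤ 1) (hxy : ε ≤ ‖x - y‖) :
    ‖(2⁻¹ : ℝ) • (x + y)‖ ≤ (1 - (ε / 2) ^ p.toReal) ^ (1 / p.toReal) :=
  stmt_8_general p hp hp' m ε hε x y hx hy hxy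
end
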